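/- arXiv:1711.10702 — 11 statements merged into one kernel-verified Lean document; each statement's English description precedes it below -/
import Mathlib

section
/- A subset E of ℝ is ρ-statistically downward compact if and only if E is bounded above. -/
open Filter Pointwise

/-- Number of indices `k ≤ n` with `α (k+1) - α k ≥ ε`. -/
noncomputable def dCount (α : ℕ → ℝ) (ε : ℝ) (n : ℕ) : ℕ :=
  ((Finset.range (n + 1)).filter (fun k => ε ≤ α (k + 1) - α k)).card

/-- Number of indices `k ≤ n` with `|α (k+1) - α k| ≥ ε`. -/
noncomputable def aCount (α : ℕ → ℝ) (ε : ℝ) (n : ℕ) : ℕ :=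
  ((Finset.range (n + 1)).filter (fun k => ε ≤ |α (k + 1) - α k|)).card

/-- Number of indices `k ≤ n` with `|α k - L| ≥ ε`. -/
noncomputable def cCount (α : ℕ → ℝ) (L ε : ℝ) (n : ℕ) : ℕ :=
  ((Finset.range (n + 1)).filter (fun k => ε ≤ |α k - L|)).card

/-- `α` is ρ-statistically downward quasi-Cauchy. -/
def RDQC (ρ α : ℕ → ℝ) : Prop :=
  ∀ ε : ℝ, 0 < ε → Tendsto (fun n => (dCount α ε n : ℝ) / ρ n) atTop (nhds 0)

/-- `α` is ρ-statistically quasi-Cauchy (with absolute value). -/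
def RQC (ρ α : ℕ → ℝ) : Prop :=
  ∀ ε : ℝ, 0 < ε → Tendsto (fun n => (aCount α ε n : ℝ) / ρ n) atTop (nhds 0)

/-- `α` is ρ-statistically convergent to `L`. -/
def RStatConv (ρ α : ℕ → ℝ) (L : ℝ) : Prop :=
  ∀ ε : ℝ, 0 < ε → Tendsto (fun n => (cCount α L ε n : ℝ) / ρ n) atTop (nhds 0)

/-- `E` is ρ-statistically downward compact. -/
def DCompact (ρ : ℕ → ℝ) (E : Set ℝ) : Prop :=
  ∀ α : ℕ → ℝ, (∀ k, α k ∈ E) → ∃ φ : ℕ → ℕ, StrictMono φ ∧ RDQC ρ (α ∘ φ)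

/-- `f` is ρ-statistically downward continuous on `E`. -/
def DownCont (ρ : ℕ → ℝ) (E : Set ℝ) (f : ℝ → ℝ) : Prop :=
  ∀ α : ℕ → ℝ, (∀ k, α k ∈ E) → RDQC ρ α → RDQC ρ (fun k => f (α k))

/-!
A sequence whose steps eventually stay below every `ε > 0` is ρ-statistically downward
quasi-Cauchy, because only finitely many indices are counted and `ρ n → ∞`. If `E` is bounded
above, every sequence in `E` has a monotone subsequence: a nondecreasing one converges, so its
steps tend to `0`, and a nonincreasing one has no positive steps at all. If `E` is unbounded
above, it contains a sequence climbing by at least `1` at each step; every subsequence still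
does, so all of its first `n + 1` steps are counted, and `ρ n = O(n)` keeps `(n + 1) / ρ n`
away from `0`.
-/

open Topology

section DownwardCount

variable {γ : ℕ → ℝ} {ε : ℝ}

theorem dCount_le_of_forall_sub_lt {N : ℕ} (hN : ∀ k ≥ N, γ (k + 1) - γ k < ε) (n : ℕ) :
    dCount γ ε n ≤ N := by
  calc dCount γ ε n ≤ (Finset.range N).card := by
        refine Finset.card_le_card fun k hk => ?_
        simp only [Finset.mem_filter, Finset.mem_range] at hk ⊢
        by_contra! hkN
        exact (hN k hkN).not_ge hk.2
    _ = N := Finset.card_range N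

theorem dCount_eq_of_forall_le_sub (h : ∀ k, ε ≤ γ (k + 1) - γ k) (n : ℕ) :
    dCount γ ε n = n + 1 := by
  rw [dCount, Finset.filter_true_of_mem fun k _ => h k, Finset.card_range]

variable {ρ : ℕ → ℝ} (htop : Tendsto ρ atTop atTop)
include htop

theorem rdqc_of_eventually_sub_lt (h : ∀ ε > 0, ∀ᶠ k in atTop, γ (k + 1) - γ k < ε) :
    RDQC ρ γ := by
  intro ε hε
  obtain ⟨N, hN⟩ := eventually_atTop.1 (h ε hε)
  refine squeeze_zero' ?_ ?_ (tendsto_const_nhds (x := (N : ℝ)) |>.div_atTop htop)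
  · filter_upwards [htop.eventually_gt_atTop 0] with n hn
    positivity
  · filter_upwards [htop.eventually_gt_atTop 0] with n hn
    gcongr
    exact_mod_cast dCount_le_of_forall_sub_lt hN n

theorem not_rdqc_of_forall_one_le_sub (hratio : ∃ C : ℝ, ∀ᶠ n in atTop, ρ n / (n : ℝ) ≤ C)
    (h : ∀ k, 1 ≤ γ (k + 1) - γ k) : ¬RDQC ρ γ := by
  intro hγ
  obtain ⟨C, hC⟩ := hratio
  have hpos : ∀ᶠ n in atTop, 0 < ρ n := htop.eventually_gt_atTop 0
  have hzero : Tendsto (fun n : ℕ => ((n : ℝ) + 1) / ρ n) atTop (𝓝[>] 0) := by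
    refine tendsto_nhdsWithin_iff.2 ⟨?_, ?_⟩
    · simpa [dCount_eq_of_forall_le_sub h] using hγ 1 one_pos
    · filter_upwards [hpos] with n hn
      exact div_pos (by positivity) hn
  have hinf : Tendsto (fun n : ℕ => ρ n / ((n : ℝ) + 1)) atTop atTop := by
    simpa only [Pi.inv_def, inv_div] using hzero.inv_tendsto_nhdsGT_zero
  obtain ⟨n, hCn, hn, hρn, hn1⟩ :=
    ((hinf.eventually_gt_atTop C).and (hC.and (hpos.and (eventually_ge_atTop 1)))).exists
  have hle : ρ n / ((n : ℝ) + 1) ≤ ρ n / n :=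
    div_le_div_of_nonneg_left hρn.le (by exact_mod_cast hn1) (by linarith)
  linarith

end DownwardCount

theorem exists_subseq_eventually_sub_lt_of_bddAbove {α : ℕ → ℝ} (hα : BddAbove (Set.range α)) :
    ∃ φ : ℕ → ℕ, StrictMono φ ∧ ∀ ε > 0, ∀ᶠ k in atTop, α (φ (k + 1)) - α (φ k) < ε := by
  obtain ⟨g, hg | hg⟩ := exists_increasing_or_nonincreasing_subseq' (· ≤ ·) α
  · have hlim := tendsto_atTop_ciSup (monotone_nat_of_le_succ (f := α ∘ g) hg)
      (hα.mono (Set.range_comp_subset_range g α))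
    have hsub : Tendsto (fun k => α (g (k + 1)) - α (g k)) atTop (𝓝 0) := by
      simpa using (hlim.comp (tendsto_add_atTop_nat 1)).sub hlim
    exact ⟨g, g.strictMono, fun ε hε => hsub.eventually_lt_const hε⟩
  · refine ⟨g, g.strictMono, fun ε hε => Eventually.of_forall fun k => ?_⟩
    linarith [not_le.1 (hg k (k + 1) k.lt_succ_self)]

theorem exists_seq_mem_add_one_le_of_not_bddAbove {E : Set ℝ} (hE : ¬BddAbove E) :
    ∃ α : ℕ → ℝ, (∀ k, α k ∈ E) ∧ ∀ k, α k + 1 ≤ α (k + 1) := by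
  choose f hfE hf using fun x : ℝ => (not_bddAbove_iff.1 hE (x + 1))
  refine ⟨fun n => f^[n + 1] 0, fun n => ?_, fun n => ?_⟩
  · simp only [Function.iterate_succ_apply', hfE]
  · simp only [Function.iterate_succ_apply' f (n + 1)]
    exact (hf _).le

theorem one_le_sub_comp_of_add_one_le {α : ℕ → ℝ} (hα : ∀ k, α k + 1 ≤ α (k + 1))
    {φ : ℕ → ℕ} (hφ : StrictMono φ) (k : ℕ) : 1 ≤ α (φ (k + 1)) - α (φ k) := by
  have hmono : Monotone α := monotone_nat_of_le_succ fun n => by linarith [hα n]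
  linarith [hα (φ k), hmono (hφ k.lt_succ_self : φ k + 1 ≤ φ (k + 1))]

theorem dcompact_iff_bddAbove_general (ρ : ℕ → ℝ)
    (htop : Tendsto ρ atTop atTop)
    (hratio : ∃ C : ℝ, ∀ᶠ n in atTop, ρ n / (n : ℝ) ≤ C)
    (E : Set ℝ) :
    DCompact ρ E ↔ BddAbove E := by
  constructor
  · intro hD
    by_contra hE
    obtain ⟨α, hαE, hα⟩ := exists_seq_mem_add_one_le_of_not_bddAbove hE
    obtain ⟨φ, hφ, hq⟩ := hD α hαE
    exact not_rdqc_of_forall_one_le_sub htop hratio (one_le_sub_comp_of_add_one_le hα hφ) hq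
  · intro hE α hαE
    obtain ⟨φ, hφ, h⟩ :=
      exists_subseq_eventually_sub_lt_of_bddAbove (hE.mono (Set.range_subset_iff.2 hαE))
    exact ⟨φ, hφ, rdqc_of_eventually_sub_lt htop h⟩

theorem dcompact_iff_bddAbove (ρ : ℕ → ℝ) (hpos : ∀ n, 0 < ρ n) (hmono : Monotone ρ)
    (htop : Tendsto ρ atTop atTop)
    (hratio : ∃ C : ℝ, ∀ᶠ n in atTop, ρ n / (n : ℝ) ≤ C)
    (hdiff : ∃ M : ℝ, ∀ n, |ρ (n + 1) - ρ n| ≤ M) (E : Set ℝ) :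
    DCompact ρ E ↔ BddAbove E :=
  dcompact_iff_bddAbove_general ρ htop hratio E
end

section
/- If a sequence (α_k) of reals is ρ-statistically convergent to some L (i.e. for every ε > 0, lim_{n→∞} (1/ρ_n)·|{k ≤ n : |α_k − L| ≥ ε}| = 0), then (α_k) is ρ-statistically downward quasi-Cauchy. -/
open Filter Pointwise

/- Each index counted by `dCount α ε n` has `|α k - L| ≥ ε/2` or `|α (k+1) - L| ≥ ε/2`, so
`dCount α ε n ≤ 2 · cCount α L (ε/2) (n+1)`. Bounded increments and `ρ → ∞` make `ρ (n+1) / ρ n`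
eventually bounded, so dividing by `ρ n` instead of `ρ (n+1)` costs only a constant factor. -/

open Finset Topology

section Counting

variable (α : ℕ → ℝ) (L : ℝ) {ε : ℝ} (n : ℕ)

lemma cCount_shift_le : cCount (fun k => α (k + 1)) L ε n ≤ cCount α L ε (n + 1) :=
  card_le_card_of_injOn (· + 1) (fun k hk => by simp_all) (fun _ _ _ _ => Nat.add_right_cancel)

lemma dCount_le_cCount_add_cCount_shift :
    dCount α ε n ≤ cCount α L (ε / 2) n + cCount (fun k => α (k + 1)) L (ε / 2) n := by
  have hsub : (range (n + 1)).filter (fun k => ε ≤ α (k + 1) - α k) ⊆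
      (range (n + 1)).filter (fun k => ε / 2 ≤ |α k - L| ∨ ε / 2 ≤ |α (k + 1) - L|) := by
    refine monotone_filter_right _ fun k _ hk => ?_
    by_contra! hlt
    have h₀ := (abs_lt.mp hlt.1).1
    have h₁ := (abs_lt.mp hlt.2).2
    linarith
  rw [filter_or] at hsub
  exact (card_le_card hsub).trans (card_union_le _ _)

lemma dCount_le_two_mul_cCount : dCount α ε n ≤ 2 * cCount α L (ε / 2) (n + 1) := by
  have hmono : cCount α L (ε / 2) n ≤ cCount α L (ε / 2) (n + 1) :=
    card_le_card (filter_subset_filter _ (range_subset_range.mpr (by omega)))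
  have := dCount_le_cCount_add_cCount_shift α L (ε := ε) n
  have := cCount_shift_le α L n (ε := ε / 2)
  omega

end Counting

lemma exists_eventually_succ_le_mul {ρ : ℕ → ℝ} (htop : Tendsto ρ atTop atTop)
    (hdiff : ∃ M : ℝ, ∀ n, |ρ (n + 1) - ρ n| ≤ M) :
    ∃ K : ℝ, ∀ᶠ n in atTop, ρ (n + 1) ≤ K * ρ n := by
  obtain ⟨M, hM⟩ := hdiff
  have hM₀ : 0 ≤ M := (abs_nonneg _).trans (hM 0)
  refine ⟨1 + M, (htop.eventually_ge_atTop 1).mono fun n hn => ?_⟩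
  have := (abs_le.mp (hM n)).2
  nlinarith

lemma tendsto_div_zero_of_le_succ {ρ u v : ℕ → ℝ} {K : ℝ} (hpos : ∀ᶠ n in atTop, 0 < ρ n)
    (hK : ∀ᶠ n in atTop, ρ (n + 1) ≤ K * ρ n) (hu : ∀ n, 0 ≤ u n) (huv : ∀ n, u n ≤ v (n + 1))
    (hv : Tendsto (fun n => v n / ρ n) atTop (𝓝 0)) :
    Tendsto (fun n => u n / ρ n) atTop (𝓝 0) := by
  have hv' : Tendsto (fun n => v (n + 1) / ρ (n + 1) * K) atTop (𝓝 0) := by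
    simpa using (hv.comp (tendsto_add_atTop_nat 1)).mul_const K
  have hpos' := (tendsto_add_atTop_nat 1).eventually hpos
  refine squeeze_zero' (hpos.mono fun n hn => div_nonneg (hu n) hn.le) ?_ hv'
  filter_upwards [hpos, hpos', hK] with n hn hn' hKn
  calc u n / ρ n ≤ v (n + 1) / ρ n := div_le_div_of_nonneg_right (huv n) hn.le
    _ = v (n + 1) / ρ (n + 1) * (ρ (n + 1) / ρ n) := by field_simp
    _ ≤ v (n + 1) / ρ (n + 1) * K :=
      mul_le_mul_of_nonneg_left ((div_le_iff₀ hn).mpr hKn)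
        (div_nonneg ((hu n).trans (huv n)) hn'.le)

theorem rstatconv_rdqc_general (ρ : ℕ → ℝ)
    (htop : Tendsto ρ atTop atTop)
    (hdiff : ∃ M : ℝ, ∀ n, |ρ (n + 1) - ρ n| ≤ M) (α : ℕ → ℝ) (L : ℝ)
    (h : RStatConv ρ α L) : RDQC ρ α := by
  intro ε hε
  obtain ⟨K, hK⟩ := exists_eventually_succ_le_mul htop hdiff
  refine tendsto_div_zero_of_le_succ (v := fun n => 2 * (cCount α L (ε / 2) n : ℝ))
    (htop.eventually_gt_atTop 0) hK (fun n => Nat.cast_nonneg _)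
    (fun n => by exact_mod_cast dCount_le_two_mul_cCount α L n) ?_
  simpa [mul_div_assoc] using (h (ε / 2) (half_pos hε)).const_mul 2

theorem rstatconv_rdqc (ρ : ℕ → ℝ) (hpos : ∀ n, 0 < ρ n) (hmono : Monotone ρ)
    (htop : Tendsto ρ atTop atTop)
    (hratio : ∃ C : ℝ, ∀ᶠ n in atTop, ρ n / (n : ℝ) ≤ C)
    (hdiff : ∃ M : ℝ, ∀ n, |ρ (n + 1) - ρ n| ≤ M) (α : ℕ → ℝ) (L : ℝ)
    (h : RStatConv ρ α L) : RDQC ρ α :=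
  rstatconv_rdqc_general ρ htop hdiff α L h
end

section
/- The union of finitely many ρ-statistically downward compact subsets of ℝ is ρ-statistically downward compact. -/
open Filter Pointwise

theorem exists_strictMono_forall_mem_of_mem_biUnion {ι α : Type*} (s : Finset ι) (E : ι → Set α)
    {a : ℕ → α} (ha : ∀ k, a k ∈ ⋃ i ∈ s, E i) :
    ∃ i ∈ s, ∃ ψ : ℕ → ℕ, StrictMono ψ ∧ ∀ k, a (ψ k) ∈ E i := by
  have hfreq : ∃ᶠ k in atTop, ∃ i ∈ s, a k ∈ E i :=
    Frequently.of_forall fun k => by simpa only [Set.mem_iUnion, exists_prop] using ha k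
  obtain ⟨i, hi, hfreq_i⟩ := s.frequently_exists.mp hfreq
  obtain ⟨ψ, hψ, hψE⟩ := extraction_of_frequently_atTop hfreq_i
  exact ⟨i, hi, ψ, hψ, hψE⟩

theorem dcompact_finite_union_general (ρ : ℕ → ℝ) {ι : Type*} (s : Finset ι) (E : ι → Set ℝ)
    (h : ∀ i ∈ s, DCompact ρ (E i)) : DCompact ρ (⋃ i ∈ s, E i) := by
  intro α hα
  obtain ⟨i, hi, ψ, hψ, hψE⟩ := exists_strictMono_forall_mem_of_mem_biUnion s E hα
  obtain ⟨φ, hφ, hqc⟩ := h i hi (α ∘ ψ) hψE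
  exact ⟨ψ ∘ φ, hψ.comp hφ, hqc⟩

theorem dcompact_finite_union (ρ : ℕ → ℝ) (hpos : ∀ n, 0 < ρ n) (hmono : Monotone ρ)
    (htop : Tendsto ρ atTop atTop)
    (hratio : ∃ C : ℝ, ∀ᶠ n in atTop, ρ n / (n : ℝ) ≤ C)
    (hdiff : ∃ M : ℝ, ∀ n, |ρ (n + 1) - ρ n| ≤ M) {ι : Type*} (s : Finset ι) (E : ι → Set ℝ)
    (h : ∀ i ∈ s, DCompact ρ (E i)) : DCompact ρ (⋃ i ∈ s, E i) :=
  dcompact_finite_union_general ρ s E h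
end

section
/- If f and g are ρ-statistically downward continuous functions on a subset E of ℝ, then f + g is ρ-statistically downward continuous on E. -/
open Filter Pointwise

theorem dCount_add_le (a b : ℕ → ℝ) (ε : ℝ) (n : ℕ) :
    dCount (a + b) ε n ≤ dCount a (ε / 2) n + dCount b (ε / 2) n := by
  unfold dCount
  refine (Finset.card_le_card fun k hk => ?_).trans (Finset.card_union_le _ _)
  simp only [Finset.mem_filter, Finset.mem_union, Pi.add_apply] at hk ⊢
  by_contra! h
  linarith [h.1 hk.1, h.2 hk.1]

theorem RDQC.add {ρ a b : ℕ → ℝ} (hρ : ∀ n, 0 ≤ ρ n) (ha : RDQC ρ a) (hb : RDQC ρ b) :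
    RDQC ρ (a + b) := by
  intro ε hε
  have hsum := (ha (ε / 2) (half_pos hε)).add (hb (ε / 2) (half_pos hε))
  rw [add_zero] at hsum
  refine squeeze_zero (fun n => div_nonneg (Nat.cast_nonneg _) (hρ n)) (fun n => ?_) hsum
  rw [← add_div]
  gcongr
  · exact hρ n
  · exact_mod_cast dCount_add_le a b ε n

theorem downCont_add_general (ρ : ℕ → ℝ) (hpos : ∀ n, 0 < ρ n) (E : Set ℝ) (f g : ℝ → ℝ)
    (hf : DownCont ρ E f) (hg : DownCont ρ E g) :
    DownCont ρ E (fun x => f x + g x) := fun α hα hqc =>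
  RDQC.add (fun n => (hpos n).le) (hf α hα hqc) (hg α hα hqc)

theorem downCont_add (ρ : ℕ → ℝ) (hpos : ∀ n, 0 < ρ n) (hmono : Monotone ρ)
    (htop : Tendsto ρ atTop atTop) (E : Set ℝ) (f g : ℝ → ℝ)
    (hf : DownCont ρ E f) (hg : DownCont ρ E g) :
    DownCont ρ E (fun x => f x + g x) :=
  downCont_add_general ρ hpos E f g hf hg
end

section
/- If f is ρ-statistically downward continuous on a subset E of ℝ, then f is ρ-statistically ward continuous on E, i.e., f maps ρ-statistically quasi-Cauchy sequences (defined with |α_{k+1} − α_k|) in E to ρ-statistically quasi-Cauchy sequences. -/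
open Filter Pointwise

/-
If `α` is ρ-statistically quasi-Cauchy, so is every reindexing `α ∘ σ` with `|σ k - k| ≤ 1`:
a jump of `α ∘ σ` at `k` forces a jump of a third the size of `α` at `k - 1`, `k` or `k + 1`,
which at most triples the count up to a bounded error, negligible as `ρ → ∞`. In particular
`α` and its two "pair swaps" `α ∘ σ₀`, `α ∘ σ₁`, where `σᵣ` exchanges `k` and `k + 1` for
`k ≡ r (mod 2)`, are downward quasi-Cauchy, hence so are their images under `f`. An upward jump
`f (α (k+1)) - f (α k) ≤ -ε` of `f ∘ α` is a downward jump of `f ∘ α ∘ σ_{k mod 2}` at `k`, so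
the big jumps of `f ∘ α` are covered by the downward jumps of these three sequences.
-/

open Finset Topology

def DensityZero (ρ : ℕ → ℝ) (p : ℕ → Prop) [DecidablePred p] : Prop :=
  Tendsto (fun n => (((range (n + 1)).filter p).card : ℝ) / ρ n) atTop (𝓝 0)

namespace DensityZero

variable {ρ : ℕ → ℝ} {p q : ℕ → Prop} [DecidablePred p] [DecidablePred q]

lemma of_card_le {c : ℕ → ℕ} (hc : Tendsto (fun n => (c n : ℝ) / ρ n) atTop (𝓝 0))
    (hle : ∀ n, ((range (n + 1)).filter p).card ≤ c n) : DensityZero ρ p := by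
  refine squeeze_zero_norm (fun n => ?_) (tendsto_zero_iff_norm_tendsto_zero.mp hc)
  simp only [Real.norm_eq_abs, abs_div, Nat.abs_cast]
  gcongr
  exact_mod_cast hle n

lemma mono (hq : DensityZero ρ q) (hpq : ∀ k, p k → q k) : DensityZero ρ p :=
  of_card_le hq fun _ => card_le_card (monotone_filter_right _ fun k _ => hpq k)

lemma or (hp : DensityZero ρ p) (hq : DensityZero ρ q) : DensityZero ρ (fun k => p k ∨ q k) := by
  refine of_card_le
    (c := fun n => ((range (n + 1)).filter p).card + ((range (n + 1)).filter q).card) ?_ fun n => ?_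
  · simpa only [Nat.cast_add, add_div, add_zero] using hp.add hq
  · rw [filter_or]
    exact card_union_le _ _

lemma card_filter_comp_add_one_le (n : ℕ) :
    ((range (n + 1)).filter (fun k => p (k + 1))).card ≤ ((range (n + 1)).filter p).card + 1 := by
  have hsub : ((range (n + 1)).filter (fun k => p (k + 1))).map (addRightEmbedding 1) ⊆
      insert (n + 1) ((range (n + 1)).filter p) := by
    intro m hm
    simp only [Finset.mem_map, mem_filter, mem_range, addRightEmbedding_apply] at hm
    obtain ⟨k, ⟨hk, hpk⟩, rfl⟩ := hm
    rcases Nat.lt_or_ge (k + 1) (n + 1) with hlt | hge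
    · exact mem_insert_of_mem (mem_filter.mpr ⟨mem_range.mpr hlt, hpk⟩)
    · exact mem_insert.mpr (Or.inl (by omega))
  simpa only [card_map] using (card_le_card hsub).trans (card_insert_le _ _)

lemma card_filter_comp_sub_one_le (n : ℕ) :
    ((range (n + 1)).filter (fun k => p (k - 1))).card ≤ ((range (n + 1)).filter p).card + 1 := by
  have hsub : (range (n + 1)).filter (fun k => p (k - 1)) ⊆
      insert 0 (((range (n + 1)).filter p).map (addRightEmbedding 1)) := by
    intro k hk
    simp only [mem_filter, mem_range] at hk
    simp only [mem_insert, Finset.mem_map, mem_filter, mem_range, addRightEmbedding_apply]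
    rcases Nat.eq_zero_or_pos k with rfl | hk0
    · exact Or.inl rfl
    · exact Or.inr ⟨k - 1, ⟨by omega, hk.2⟩, by omega⟩
  simpa only [card_map] using (card_le_card hsub).trans (card_insert_le _ _)

lemma of_card_le_add_one (hρ : Tendsto ρ atTop atTop) (hq : DensityZero ρ q)
    (hle : ∀ n, ((range (n + 1)).filter p).card ≤ ((range (n + 1)).filter q).card + 1) :
    DensityZero ρ p := by
  refine of_card_le ?_ hle
  simpa only [Nat.cast_add, Nat.cast_one, add_div, one_div, Pi.inv_apply, add_zero] using
    hq.add hρ.inv_tendsto_atTop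

lemma neighbours (hρ : Tendsto ρ atTop atTop) (hp : DensityZero ρ p) :
    DensityZero ρ (fun k => p (k - 1) ∨ p k ∨ p (k + 1)) :=
  (hp.of_card_le_add_one hρ card_filter_comp_sub_one_le).or
    (hp.or (hp.of_card_le_add_one hρ card_filter_comp_add_one_le))

end DensityZero

lemma RQC.densityZero {ρ α : ℕ → ℝ} (hα : RQC ρ α) {ε : ℝ} (hε : 0 < ε) :
    DensityZero ρ (fun k => ε ≤ |α (k + 1) - α k|) :=
  hα ε hε

lemma RDQC.densityZero {ρ α : ℕ → ℝ} (hα : RDQC ρ α) {ε : ℝ} (hε : 0 < ε) :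
    DensityZero ρ (fun k => ε ≤ α (k + 1) - α k) :=
  hα ε hε

lemma RQC.rdqc {ρ α : ℕ → ℝ} (hα : RQC ρ α) : RDQC ρ α := fun _ hε =>
  (hα.densityZero hε).mono fun _ h => h.trans (le_abs_self _)

lemma abs_sub_le_sum_Ico (α : ℕ → ℝ) {a b i j : ℕ} (hi : i ∈ Icc a b) (hj : j ∈ Icc a b) :
    |α j - α i| ≤ ∑ m ∈ Ico a b, |α (m + 1) - α m| := by
  simp only [mem_Icc] at hi hj
  have hsum : ∀ s t, a ≤ s → t ≤ b → s ≤ t →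
      dist (α s) (α t) ≤ ∑ m ∈ Ico a b, |α (m + 1) - α m| := fun s t has htb hst =>
    calc dist (α s) (α t) ≤ ∑ m ∈ Ico s t, dist (α m) (α (m + 1)) := dist_le_Ico_sum_dist α hst
      _ ≤ ∑ m ∈ Ico a b, dist (α m) (α (m + 1)) :=
          sum_le_sum_of_subset_of_nonneg (Ico_subset_Ico has htb) fun _ _ _ => dist_nonneg
      _ = ∑ m ∈ Ico a b, |α (m + 1) - α m| :=
          sum_congr rfl fun m _ => by rw [dist_comm, Real.dist_eq]
  rcases le_total i j with hij | hji
  · simpa only [Real.dist_eq, abs_sub_comm] using hsum i j hi.1 hj.2 hij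
  · simpa only [Real.dist_eq] using hsum j i hj.1 hi.2 hji

lemma le_abs_sub_of_near {α : ℕ → ℝ} {σ : ℕ → ℕ} (hσ : ∀ k, σ k ≤ k + 1 ∧ k ≤ σ k + 1)
    {ε : ℝ} (hε : 0 < ε) {k : ℕ} (h : ε ≤ |α (σ (k + 1)) - α (σ k)|) :
    ε / 3 ≤ |α (k - 1 + 1) - α (k - 1)| ∨ ε / 3 ≤ |α (k + 1) - α k| ∨
      ε / 3 ≤ |α (k + 1 + 1) - α (k + 1)| := by
  have hmem : ∀ i, i = k ∨ i = k + 1 → σ i ∈ Icc (k - 1) (k + 2) := by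
    intro i hi
    have := hσ i
    simp only [mem_Icc]
    omega
  have hcard : ((Ico (k - 1) (k + 2)).card : ℝ) ≤ 3 := by
    rw [Nat.card_Ico]; exact_mod_cast (by omega : k + 2 - (k - 1) ≤ 3)
  obtain ⟨m, hm, hjump⟩ := exists_le_of_sum_le (nonempty_Ico.mpr (by omega)) <|
    calc ∑ _ ∈ Ico (k - 1) (k + 2), ε / 3 = (Ico (k - 1) (k + 2)).card * (ε / 3) := by
          rw [sum_const, nsmul_eq_mul]
      _ ≤ ε := by nlinarith
      _ ≤ _ := h.trans (abs_sub_le_sum_Ico α (hmem k (Or.inl rfl)) (hmem (k + 1) (Or.inr rfl)))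
  have : m = k - 1 ∨ m = k ∨ m = k + 1 := by rw [mem_Ico] at hm; omega
  rcases this with rfl | rfl | rfl <;> simp only [hjump, true_or, or_true]

lemma RQC.comp_of_near {ρ α : ℕ → ℝ} {σ : ℕ → ℕ} (hρ : Tendsto ρ atTop atTop) (hα : RQC ρ α)
    (hσ : ∀ k, σ k ≤ k + 1 ∧ k ≤ σ k + 1) : RQC ρ (fun k => α (σ k)) := fun ε hε =>
  ((hα.densityZero (by positivity : 0 < ε / 3)).neighbours hρ).mono fun _ h =>
    le_abs_sub_of_near hσ hε h

def swapPairs (r k : ℕ) : ℕ := if k % 2 = r then k + 1 else k - 1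

lemma swapPairs_near (r k : ℕ) : swapPairs r k ≤ k + 1 ∧ k ≤ swapPairs r k + 1 := by
  unfold swapPairs; split_ifs <;> omega

lemma swapPairs_mod_two (k : ℕ) :
    swapPairs (k % 2) k = k + 1 ∧ swapPairs (k % 2) (k + 1) = k := by
  unfold swapPairs; constructor <;> split_ifs <;> omega

lemma RQC.of_rdqc_swapPairs {ρ α : ℕ → ℝ} (hα : RDQC ρ α)
    (hswap : ∀ r, RDQC ρ (fun k => α (swapPairs r k))) : RQC ρ α := fun ε hε =>
  ((hα.densityZero hε).or (((hswap 0).densityZero hε).or ((hswap 1).densityZero hε))).mono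
    fun k hk => by
      refine (le_abs.mp hk).imp_right fun hneg => ?_
      obtain ⟨h₀, h₁⟩ := swapPairs_mod_two k
      rcases Nat.mod_two_eq_zero_or_one k with hr | hr <;> rw [hr] at h₀ h₁
      · left; rw [h₀, h₁]; linarith
      · right; rw [h₀, h₁]; linarith

theorem downCont_ward_general (ρ : ℕ → ℝ)
    (htop : Tendsto ρ atTop atTop)
    (E : Set ℝ) (f : ℝ → ℝ)
    (hf : DownCont ρ E f) :
    ∀ α : ℕ → ℝ, (∀ k, α k ∈ E) → RQC ρ α → RQC ρ (fun k => f (α k)) := by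
  intro α hαE hα
  refine RQC.of_rdqc_swapPairs (hf α hαE hα.rdqc) fun r => ?_
  exact hf _ (fun k => hαE _) (hα.comp_of_near htop (swapPairs_near r)).rdqc

theorem downCont_ward (ρ : ℕ → ℝ) (hpos : ∀ n, 0 < ρ n) (hmono : Monotone ρ)
    (htop : Tendsto ρ atTop atTop)
    (hratio : ∃ C : ℝ, ∀ᶠ n in atTop, ρ n / (n : ℝ) ≤ C)
    (hdiff : ∃ M : ℝ, ∀ n, |ρ (n + 1) - ρ n| ≤ M) (E : Set ℝ) (f : ℝ → ℝ)
    (hf : DownCont ρ E f) :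
    ∀ α : ℕ → ℝ, (∀ k, α k ∈ E) → RQC ρ α → RQC ρ (fun k => f (α k)) :=
  downCont_ward_general ρ htop E f hf
end

section
/- With ρ_1 = 1 and ρ_n = n + 1/n for n > 1, the function f(x) = −x is ρ-statistically ward continuous on ℝ but not ρ-statistically downward continuous on ℝ. -/
open Filter Pointwise

theorem aCount_neg (α : ℕ → ℝ) (ε : ℝ) (n : ℕ) :
    aCount (fun k => -α k) ε n = aCount α ε n := by
  simp only [aCount, neg_sub_neg, abs_sub_comm]

theorem RQC.neg {ρ α : ℕ → ℝ} (h : RQC ρ α) : RQC ρ (fun k => -α k) := by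
  simpa only [RQC, aCount_neg] using h

theorem dCount_eq_zero_of_antitone {α : ℕ → ℝ} (hα : Antitone α) {ε : ℝ} (hε : 0 < ε)
    (n : ℕ) : dCount α ε n = 0 := by
  rw [dCount, Finset.card_eq_zero, Finset.filter_eq_empty_iff]
  intro k _ hk
  linarith [hα k.le_succ]

theorem RDQC.of_antitone (ρ : ℕ → ℝ) {α : ℕ → ℝ} (hα : Antitone α) : RDQC ρ α := by
  intro ε hε
  simp only [dCount_eq_zero_of_antitone hα hε, Nat.cast_zero, zero_div]
  exact tendsto_const_nhds

theorem dCount_natCast_one (n : ℕ) : dCount (fun k => (k : ℝ)) 1 n = n + 1 := by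
  rw [dCount, Finset.filter_true_of_mem, Finset.card_range]
  intro k _
  push_cast
  linarith

theorem not_RDQC_natCast {ρ : ℕ → ℝ} (hpos : ∀ᶠ n in atTop, 0 < ρ n)
    (hle : ∀ᶠ n in atTop, ρ n ≤ n + 1) : ¬ RDQC ρ (fun k => (k : ℝ)) := by
  intro h
  have hratio : ∀ᶠ n in atTop, (1 : ℝ) ≤ (dCount (fun k => (k : ℝ)) 1 n : ℝ) / ρ n := by
    filter_upwards [hpos, hle] with n hpos hle
    rw [le_div_iff₀ hpos, one_mul, dCount_natCast_one]
    exact_mod_cast hle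
  linarith [ge_of_tendsto (h 1 one_pos) hratio]

theorem rho_pos_and_le_succ (n : ℕ) :
    0 < (if n ≤ 1 then 1 else (n : ℝ) + 1 / n) ∧
      (if n ≤ 1 then 1 else (n : ℝ) + 1 / n) ≤ n + 1 := by
  split_ifs with hn
  · exact ⟨one_pos, by linarith [n.cast_nonneg (α := ℝ)]⟩
  · have hn : (1 : ℝ) < n := by exact_mod_cast not_le.mp hn
    refine ⟨by positivity, ?_⟩
    linarith [(div_le_one (by linarith)).mpr hn.le]

theorem neg_ward_not_downward :
    (∀ α : ℕ → ℝ, RQC (fun n => if n ≤ 1 then 1 else (n : ℝ) + 1 / n) α →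
      RQC (fun n => if n ≤ 1 then 1 else (n : ℝ) + 1 / n) (fun k => -(α k))) ∧
    ¬ DownCont (fun n => if n ≤ 1 then 1 else (n : ℝ) + 1 / n) Set.univ (fun x => -x) := by
  refine ⟨fun α h => h.neg, fun h => ?_⟩
  refine not_RDQC_natCast (.of_forall fun n => (rho_pos_and_le_succ n).1)
    (.of_forall fun n => (rho_pos_and_le_succ n).2) ?_
  -- `-k` is downward quasi-Cauchy, but its image `k` rises by 1 at every step.
  have hdown := RDQC.of_antitone (fun n => if n ≤ 1 then 1 else (n : ℝ) + 1 / n)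
    (α := fun k => -(k : ℝ)) fun a b hab => neg_le_neg (Nat.cast_le.mpr hab)
  simpa only [neg_neg] using h _ (fun _ => Set.mem_univ _) hdown
end

section
/- If f is ρ-statistically downward continuous on a subset E of ℝ, then f is ρ-statistically continuous on E: for every sequence (α_k) in E that is ρ-statistically convergent to a point ℓ ∈ E, the sequence (f(α_k)) is ρ-statistically convergent to f(ℓ). -/
open Filter Pointwise

/-! If `f` were not continuous within `E` at `ℓ ∈ E`, there would be points `x j ∈ E` tending to `ℓ`
with `|f (x j) - f ℓ| ≥ ε`. Interleaving them with `ℓ`, in the order that makes `f` jump *up*,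
gives a sequence `γ → ℓ`, so `γ` is ρ-statistically downward quasi-Cauchy (only finitely many
upward steps are large, and `ρ → ∞`), while `f ∘ γ` rises by `ε` at every even step; since
`ρ n = O(n)`, the `n + 1` rises among the first `2n + 1` steps have positive ρ-density.
Continuity then turns ρ-statistical convergence of `α` into that of `f ∘ α`. -/

open Topology

section

variable {ρ : ℕ → ℝ}

lemma tendsto_natCast_div_of_le (htop : Tendsto ρ atTop atTop) {c d : ℕ → ℕ}
    (hcd : ∀ n, c n ≤ d n) (hd : Tendsto (fun n => (d n : ℝ) / ρ n) atTop (𝓝 0)) :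
    Tendsto (fun n => (c n : ℝ) / ρ n) atTop (𝓝 0) := by
  have hρ : ∀ᶠ n in atTop, 0 ≤ ρ n := htop.eventually_ge_atTop 0
  refine tendsto_of_tendsto_of_tendsto_of_le_of_le' tendsto_const_nhds hd ?_ ?_
  · filter_upwards [hρ] with n hn using by positivity
  · filter_upwards [hρ] with n hn using by gcongr; exact_mod_cast hcd n

lemma rdqc_of_tendsto (htop : Tendsto ρ atTop atTop) {α : ℕ → ℝ} {ℓ : ℝ}
    (hα : Tendsto α atTop (𝓝 ℓ)) : RDQC ρ α := by
  intro ε hε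
  have hstep : Tendsto (fun k => α (k + 1) - α k) atTop (𝓝 0) := by
    simpa using (hα.comp (tendsto_add_atTop_nat 1)).sub hα
  obtain ⟨N, hN⟩ := eventually_atTop.1 (hstep.eventually (gt_mem_nhds hε))
  refine tendsto_natCast_div_of_le htop (d := fun _ => N) (fun n => ?_)
    (tendsto_const_nhds.div_atTop htop)
  calc dCount α ε n ≤ (Finset.range N).card := by
        refine Finset.card_le_card fun k hk => ?_
        rw [Finset.mem_filter] at hk
        rw [Finset.mem_range]
        by_contra! hNk
        exact (hN k hNk).not_ge hk.2
    _ = N := Finset.card_range N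

lemma le_dCount_two_mul {β : ℕ → ℝ} {ε : ℝ} (hβ : ∀ j, ε ≤ β (2 * j + 1) - β (2 * j)) (n : ℕ) :
    n + 1 ≤ dCount β ε (2 * n) := by
  calc n + 1 = ((Finset.range (n + 1)).map ⟨(2 * ·), mul_right_injective₀ two_ne_zero⟩).card := by
        simp
    _ ≤ dCount β ε (2 * n) := by
        refine Finset.card_le_card fun k hk => ?_
        simp only [Finset.mem_map, Finset.mem_range, Function.Embedding.coeFn_mk] at hk
        obtain ⟨j, hj, rfl⟩ := hk
        exact Finset.mem_filter.2 ⟨Finset.mem_range.2 (by omega), hβ j⟩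

lemma not_rdqc_of_forall_le_sub_two_mul (htop : Tendsto ρ atTop atTop)
    (hratio : ∃ C : ℝ, ∀ᶠ n in atTop, ρ n / (n : ℝ) ≤ C) {β : ℕ → ℝ} {ε : ℝ} (hε : 0 < ε)
    (hβ : ∀ j, ε ≤ β (2 * j + 1) - β (2 * j)) : ¬ RDQC ρ β := by
  intro hRDQC
  obtain ⟨C, hC⟩ := hratio
  set C' := max C 1
  have hC' : 0 < C' := lt_max_of_lt_right one_pos
  have hdouble : Tendsto (fun n : ℕ => 2 * n) atTop atTop :=
    tendsto_id.const_mul_atTop' two_pos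
  have hlow : ∀ᶠ n in atTop, 1 / (2 * C') ≤ (dCount β ε (2 * n) : ℝ) / ρ (2 * n) := by
    filter_upwards [hdouble.eventually hC, hdouble.eventually (htop.eventually_gt_atTop 0),
      eventually_ge_atTop 1] with n hCn hρn hn
    have hρle : ρ (2 * n) ≤ C' * (2 * n) := by
      have hn' : (0 : ℝ) < (2 * n : ℕ) := by exact_mod_cast (by omega : 0 < 2 * n)
      exact_mod_cast (div_le_iff₀ hn').1 (hCn.trans (le_max_left C 1))
    have hcount : (n : ℝ) + 1 ≤ dCount β ε (2 * n) := by exact_mod_cast le_dCount_two_mul hβ n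
    rw [le_div_iff₀ hρn]
    calc 1 / (2 * C') * ρ (2 * n) ≤ 1 / (2 * C') * (C' * (2 * n)) := by gcongr
      _ = n := by field_simp
      _ ≤ _ := by linarith
  have hle_zero : 1 / (2 * C') ≤ 0 := ge_of_tendsto ((hRDQC ε hε).comp hdouble) hlow
  have hpos : 0 < 1 / (2 * C') := by positivity
  linarith

end

lemma exists_tendsto_le_sub_two_mul {E : Set ℝ} {f : ℝ → ℝ} {ℓ ε : ℝ} (hℓ : ℓ ∈ E)
    {x : ℕ → ℝ} (hxE : ∀ j, x j ∈ E) (hx : Tendsto x atTop (𝓝 ℓ))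
    (hfx : ∀ j, ε ≤ |f (x j) - f ℓ|) :
    ∃ γ : ℕ → ℝ, (∀ k, γ k ∈ E) ∧ Tendsto γ atTop (𝓝 ℓ) ∧
      ∀ j, ε ≤ f (γ (2 * j + 1)) - f (γ (2 * j)) := by
  -- pair `j` is `(ℓ, x j)` if `f` jumps up at `x j`, and `(x j, ℓ)` otherwise
  let γ : ℕ → ℝ := fun k => if (Even k ↔ f ℓ + ε ≤ f (x (k / 2))) then ℓ else x (k / 2)
  refine ⟨γ, fun k => ?_, ?_, fun j => ?_⟩
  · unfold γ; split_ifs; exacts [hℓ, hxE _]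
  · have hxk : Tendsto (fun k => x (k / 2)) atTop (𝓝 ℓ) :=
      hx.comp (Nat.tendsto_div_const_atTop two_ne_zero)
    refine tendsto_iff_dist_tendsto_zero.2 (squeeze_zero (fun _ => dist_nonneg) (fun k => ?_)
      (tendsto_iff_dist_tendsto_zero.1 hxk))
    unfold γ; split_ifs <;> simp
  · have h1 : (2 * j + 1) / 2 = j := by omega
    have h2 : 2 * j / 2 = j := by omega
    have hfj := hfx j
    unfold γ
    simp only [h1, h2, Nat.not_even_two_mul_add_one, even_two_mul, true_iff, false_iff]
    split_ifs with hup
    · linarith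
    · rw [le_abs'] at hfj
      linarith [hfj.resolve_right fun h => hup (by linarith)]

lemma DownCont.continuousWithinAt {ρ : ℕ → ℝ} {E : Set ℝ} {f : ℝ → ℝ} (hf : DownCont ρ E f)
    (htop : Tendsto ρ atTop atTop) (hratio : ∃ C : ℝ, ∀ᶠ n in atTop, ρ n / (n : ℝ) ≤ C)
    {ℓ : ℝ} (hℓ : ℓ ∈ E) : ContinuousWithinAt f E ℓ := by
  rw [Metric.continuousWithinAt_iff]
  by_contra! hcon
  obtain ⟨ε, hε, hbad⟩ := hcon
  choose x hxE hxℓ hfx using fun j : ℕ => hbad (1 / ((j : ℝ) + 1)) Nat.one_div_pos_of_nat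
  have hx : Tendsto x atTop (𝓝 ℓ) :=
    tendsto_iff_dist_tendsto_zero.2 (squeeze_zero (fun _ => dist_nonneg) (fun j => (hxℓ j).le)
      tendsto_one_div_add_atTop_nhds_zero_nat)
  obtain ⟨γ, hγE, hγ, hjump⟩ := exists_tendsto_le_sub_two_mul hℓ hxE hx hfx
  exact not_rdqc_of_forall_le_sub_two_mul htop hratio hε hjump (hf γ hγE (rdqc_of_tendsto htop hγ))

theorem downCont_statCont_general (ρ : ℕ → ℝ) (htop : Tendsto ρ atTop atTop)
    (hratio : ∃ C : ℝ, ∀ᶠ n in atTop, ρ n / (n : ℝ) ≤ C) (E : Set ℝ) (f : ℝ → ℝ)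
    (hf : DownCont ρ E f) :
    ∀ α : ℕ → ℝ, (∀ k, α k ∈ E) → ∀ ℓ ∈ E, RStatConv ρ α ℓ →
      RStatConv ρ (fun k => f (α k)) (f ℓ) := by
  intro α hαE ℓ hℓ hconv ε hε
  obtain ⟨δ, hδ, hδf⟩ := Metric.continuousWithinAt_iff.1 (hf.continuousWithinAt htop hratio hℓ) ε hε
  refine tendsto_natCast_div_of_le htop (fun n => ?_) (hconv δ hδ)
  refine Finset.card_le_card (Finset.monotone_filter_right _ fun k _ hk => ?_)
  by_contra! hlt
  exact hk.not_gt (hδf (hαE k) hlt)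

theorem downCont_statCont (ρ : ℕ → ℝ) (hpos : ∀ n, 0 < ρ n) (hmono : Monotone ρ)
    (htop : Tendsto ρ atTop atTop)
    (hratio : ∃ C : ℝ, ∀ᶠ n in atTop, ρ n / (n : ℝ) ≤ C)
    (hdiff : ∃ M : ℝ, ∀ n, |ρ (n + 1) - ρ n| ≤ M) (E : Set ℝ) (f : ℝ → ℝ)
    (hf : DownCont ρ E f) :
    ∀ α : ℕ → ℝ, (∀ k, α k ∈ E) → ∀ ℓ ∈ E, RStatConv ρ α ℓ →
      RStatConv ρ (fun k => f (α k)) (f ℓ) :=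
  downCont_statCont_general ρ htop hratio E f hf
end

section
/- The image of a ρ-statistically downward compact subset of ℝ under a ρ-statistically downward continuous function is ρ-statistically downward compact. -/
open Filter Pointwise

theorem dcompact_image_general (ρ : ℕ → ℝ) (E : Set ℝ) (f : ℝ → ℝ)
    (hE : DCompact ρ E) (hf : DownCont ρ E f) : DCompact ρ (f '' E) := by
  intro β hβ
  choose α hαE hfα using hβ
  obtain ⟨φ, hφ, hαφ⟩ := hE α hαE
  refine ⟨φ, hφ, ?_⟩
  simpa only [Function.comp_def, hfα] using hf (α ∘ φ) (fun k => hαE (φ k)) hαφ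

theorem dcompact_image (ρ : ℕ → ℝ) (hpos : ∀ n, 0 < ρ n) (hmono : Monotone ρ)
    (htop : Tendsto ρ atTop atTop) (E : Set ℝ) (f : ℝ → ℝ)
    (hE : DCompact ρ E) (hf : DownCont ρ E f) : DCompact ρ (f '' E) :=
  dcompact_image_general ρ E f hE hf
end

section
/- Any ρ-statistically downward continuous real-valued function on a ρ-statistically downward compact subset E of ℝ is uniformly continuous on E. -/
/-! If `f` were not uniformly continuous on `E`, there would be points `x k, y k ∈ E` with
`x k - y k → 0` but `f (x k) - f (y k) ≥ ε`. Downward compactness makes `y ∘ φ` downward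
quasi-Cauchy for some subsequence `φ`, and interleaving `y ∘ φ` with the nearby `x ∘ φ` keeps this
property. Yet under `f` every other step of the interleaved sequence rises by at least `ε`, so
these steps have density `1/2`, which `ρ n = O(n)` forbids for a downward quasi-Cauchy sequence. -/

open Filter Pointwise

open Topology

def interleave (β γ : ℕ → ℝ) (n : ℕ) : ℝ :=
  if n % 2 = 0 then β (n / 2) else γ (n / 2)

section Interleave

variable (β γ : ℕ → ℝ)

@[simp]
theorem interleave_two_mul (j : ℕ) : interleave β γ (2 * j) = β j := by
  simp [interleave]

@[simp]
theorem interleave_two_mul_add_one (j : ℕ) : interleave β γ (2 * j + 1) = γ j := by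
  simp [interleave, Nat.add_mod, Nat.add_div]

variable {β γ}

theorem interleave_mem {E : Set ℝ} (hβ : ∀ k, β k ∈ E) (hγ : ∀ k, γ k ∈ E) (n : ℕ) :
    interleave β γ n ∈ E := by
  obtain ⟨j, rfl | rfl⟩ := Nat.even_or_odd' n
  · simpa using hβ j
  · simpa using hγ j

theorem dCount_interleave_le {ε : ℝ} {N : ℕ} (hclose : ∀ j, N ≤ j → |γ j - β j| < ε / 2)
    (n : ℕ) : dCount (interleave β γ) ε n ≤ dCount β (ε / 2) n + 2 * N := by
  classical
  set Dβ := (Finset.range (n + 1)).filter (fun j => ε / 2 ≤ β (j + 1) - β j)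
  have hsub : (Finset.range (n + 1)).filter
        (fun k => ε ≤ interleave β γ (k + 1) - interleave β γ k) ⊆
      (Finset.range N).image (2 * ·) ∪ (Finset.range N ∪ Dβ).image (2 * · + 1) := by
    -- A jump at `2 * j` forces `j < N`; one at `2 * j + 1` with `N ≤ j` forces `β` to jump at `j`.
    intro k hk
    rw [Finset.mem_filter, Finset.mem_range] at hk
    obtain ⟨hkn, hjump⟩ := hk
    simp only [Finset.mem_union, Finset.mem_image, Finset.mem_range, Dβ, Finset.mem_filter]
    obtain ⟨j, rfl | rfl⟩ := Nat.even_or_odd' k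
    · rw [interleave_two_mul_add_one, interleave_two_mul] at hjump
      refine .inl ⟨j, ?_, rfl⟩
      by_contra! hj
      linarith [le_abs_self (γ j - β j), abs_nonneg (γ j - β j), hclose j hj]
    · rw [show 2 * j + 1 + 1 = 2 * (j + 1) by ring, interleave_two_mul,
        interleave_two_mul_add_one] at hjump
      refine .inr ⟨j, ?_, rfl⟩
      by_cases hj : j < N
      · exact .inl hj
      · exact .inr ⟨by omega, by linarith [neg_abs_le (γ j - β j), hclose j (not_lt.1 hj)]⟩
  calc dCount (interleave β γ) ε n
      ≤ ((Finset.range N).image (2 * ·) ∪ (Finset.range N ∪ Dβ).image (2 * · + 1)).card :=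
        Finset.card_le_card hsub
    _ ≤ N + (N + Dβ.card) := by
        refine (Finset.card_union_le _ _).trans (add_le_add ?_ ?_)
        · exact Finset.card_image_le.trans (Finset.card_range N).le
        · exact Finset.card_image_le.trans ((Finset.card_union_le _ _).trans (by simp))
    _ = dCount β (ε / 2) n + 2 * N := by rw [dCount]; ring

end Interleave

theorem succ_le_two_mul_dCount {α : ℕ → ℝ} {ε : ℝ} (hjump : ∀ j, ε ≤ α (2 * j + 1) - α (2 * j))
    (n : ℕ) : n + 1 ≤ 2 * dCount α ε n := by
  classical
  have hsub : (Finset.range (n / 2 + 1)).image (2 * ·) ⊆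
      (Finset.range (n + 1)).filter (fun k => ε ≤ α (k + 1) - α k) := by
    intro k hk
    obtain ⟨j, hj, rfl⟩ := Finset.mem_image.1 hk
    rw [Finset.mem_range] at hj
    exact Finset.mem_filter.2 ⟨Finset.mem_range.2 (by omega), hjump j⟩
  have hcard := Finset.card_le_card hsub
  rw [Finset.card_image_of_injective _ (fun a b h => by simpa using h),
    Finset.card_range] at hcard
  rw [dCount]
  omega

section RDQC

variable {ρ : ℕ → ℝ}

theorem RDQC.interleave {β γ : ℕ → ℝ} (hρ : Tendsto ρ atTop atTop) (hβ : RDQC ρ β)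
    (hγβ : Tendsto (fun j => γ j - β j) atTop (𝓝 0)) : RDQC ρ (interleave β γ) := by
  intro ε hε
  obtain ⟨N, hN⟩ := Metric.tendsto_atTop.1 hγβ (ε / 2) (half_pos hε)
  have hclose : ∀ j, N ≤ j → |γ j - β j| < ε / 2 := by
    simpa only [Real.dist_eq, sub_zero] using hN
  have hbound : Tendsto (fun n => (dCount β (ε / 2) n : ℝ) / ρ n + (2 * N : ℝ) / ρ n)
      atTop (𝓝 0) := by
    simpa using (hβ (ε / 2) (half_pos hε)).add (tendsto_const_nhds.div_atTop hρ)
  refine squeeze_zero' ?_ ?_ hbound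
  · filter_upwards [hρ.eventually_gt_atTop 0] with n hn
    positivity
  · filter_upwards [hρ.eventually_gt_atTop 0] with n hn
    rw [← add_div]
    gcongr
    exact_mod_cast dCount_interleave_le hclose n

theorem RDQC.tendsto_dCount_div_nat {α : ℕ → ℝ} (hρ : ∀ᶠ n in atTop, 0 < ρ n)
    (hratio : ∃ C : ℝ, ∀ᶠ n in atTop, ρ n / (n : ℝ) ≤ C) (hα : RDQC ρ α) {ε : ℝ} (hε : 0 < ε) :
    Tendsto (fun n => (dCount α ε n : ℝ) / n) atTop (𝓝 0) := by
  obtain ⟨C, hC⟩ := hratio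
  have hbound : Tendsto (fun n => (dCount α ε n : ℝ) / ρ n * C) atTop (𝓝 0) := by
    simpa using (hα ε hε).mul_const C
  refine squeeze_zero' (.of_forall fun n => by positivity) ?_ hbound
  filter_upwards [hρ, hC, eventually_gt_atTop 0] with n hρn hCn hn
  calc (dCount α ε n : ℝ) / n = (dCount α ε n : ℝ) / ρ n * (ρ n / n) := by
        field_simp
    _ ≤ (dCount α ε n : ℝ) / ρ n * C := by gcongr

theorem not_rdqc_of_forall_le_sub {α : ℕ → ℝ} (hρ : ∀ᶠ n in atTop, 0 < ρ n)
    (hratio : ∃ C : ℝ, ∀ᶠ n in atTop, ρ n / (n : ℝ) ≤ C) {ε : ℝ} (hε : 0 < ε)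
    (hjump : ∀ j, ε ≤ α (2 * j + 1) - α (2 * j)) : ¬ RDQC ρ α := by
  intro hα
  have hhalf : ∀ᶠ n : ℕ in atTop, (1 / 2 : ℝ) ≤ (dCount α ε n : ℝ) / n := by
    filter_upwards [eventually_gt_atTop 0] with n hn
    have : (n : ℝ) + 1 ≤ 2 * dCount α ε n := by exact_mod_cast succ_le_two_mul_dCount hjump n
    rw [le_div_iff₀ (by positivity)]
    linarith
  have := ge_of_tendsto (hα.tendsto_dCount_div_nat hρ hratio hε) hhalf
  norm_num at this

end RDQC

theorem exists_seq_tendsto_sub_zero_of_not_uniform {E : Set ℝ} {f : ℝ → ℝ} {ε : ℝ}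
    (h : ∀ δ, 0 < δ → ∃ x ∈ E, ∃ y ∈ E, |x - y| < δ ∧ ε ≤ |f x - f y|) :
    ∃ x y : ℕ → ℝ, (∀ k, x k ∈ E) ∧ (∀ k, y k ∈ E) ∧
      Tendsto (fun k => x k - y k) atTop (𝓝 0) ∧ ∀ k, ε ≤ f (x k) - f (y k) := by
  have horiented : ∀ k : ℕ, ∃ x ∈ E, ∃ y ∈ E, |x - y| < 1 / (k + 1) ∧ ε ≤ f x - f y := by
    intro k
    obtain ⟨x, hx, y, hy, hxy, hf⟩ := h (1 / (k + 1)) (by positivity)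
    rcases le_abs'.1 hf with hf | hf
    · exact ⟨y, hy, x, hx, by rwa [abs_sub_comm], by linarith⟩
    · exact ⟨x, hx, y, hy, hxy, hf⟩
  choose x hx y hy hxy hf using horiented
  refine ⟨x, y, hx, hy, squeeze_zero_norm (fun k => (hxy k).le) ?_, hf⟩
  exact tendsto_one_div_add_atTop_nhds_zero_nat

theorem downCont_uniformContinuous_general (ρ : ℕ → ℝ)
    (htop : Tendsto ρ atTop atTop)
    (hratio : ∃ C : ℝ, ∀ᶠ n in atTop, ρ n / (n : ℝ) ≤ C) (E : Set ℝ) (f : ℝ → ℝ)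
    (hE : DCompact ρ E) (hf : DownCont ρ E f) :
    ∀ ε : ℝ, 0 < ε → ∃ δ : ℝ, 0 < δ ∧
      ∀ x ∈ E, ∀ y ∈ E, |x - y| < δ → |f x - f y| < ε := by
  intro ε hε
  by_contra! hbad
  obtain ⟨x, y, hx, hy, hxy, hfxy⟩ := exists_seq_tendsto_sub_zero_of_not_uniform hbad
  obtain ⟨φ, hφ, hyφ⟩ := hE y hy
  have hα : RDQC ρ (interleave (y ∘ φ) (x ∘ φ)) :=
    hyφ.interleave htop (hxy.comp hφ.tendsto_atTop)
  refine not_rdqc_of_forall_le_sub (htop.eventually_gt_atTop 0) hratio hε (fun j => ?_)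
    (hf _ (interleave_mem (fun j => hy (φ j)) (fun j => hx (φ j))) hα)
  simpa using hfxy (φ j)

theorem downCont_uniformContinuous (ρ : ℕ → ℝ) (hpos : ∀ n, 0 < ρ n) (hmono : Monotone ρ)
    (htop : Tendsto ρ atTop atTop)
    (hratio : ∃ C : ℝ, ∀ᶠ n in atTop, ρ n / (n : ℝ) ≤ C)
    (hdiff : ∃ M : ℝ, ∀ n, |ρ (n + 1) - ρ n| ≤ M) (E : Set ℝ) (f : ℝ → ℝ)
    (hE : DCompact ρ E) (hf : DownCont ρ E f) :
    ∀ ε : ℝ, 0 < ε → ∃ δ : ℝ, 0 < δ ∧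
      ∀ x ∈ E, ∀ y ∈ E, |x - y| < δ → |f x - f y| < ε :=
  downCont_uniformContinuous_general ρ htop hratio E f hE hf
end

section
/- If f is uniformly continuous on a subset E of ℝ and (α_k) is a quasi-Cauchy sequence of points in E (i.e. α_{k+1} − α_k → 0), then (f(α_k)) is ρ-statistically downward quasi-Cauchy. -/
open Filter Pointwise

/-!
A uniformly continuous map sends quasi-Cauchy sequences to quasi-Cauchy sequences, and a
quasi-Cauchy sequence has only finitely many increments `≥ ε`; a bounded count divided by
`ρ n → ∞` tends to `0`.
-/

def QuasiCauchy (α : ℕ → ℝ) : Prop :=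
  Tendsto (fun k => α (k + 1) - α k) atTop (nhds 0)

theorem quasiCauchy_iff_tendsto_uniformity {α : ℕ → ℝ} :
    QuasiCauchy α ↔ Tendsto (fun k => (α (k + 1), α k)) atTop (uniformity ℝ) := by
  rw [tendsto_uniformity_iff_dist_tendsto_zero, QuasiCauchy,
    tendsto_zero_iff_abs_tendsto_zero]
  simp only [Real.dist_eq, Function.comp_def]

theorem QuasiCauchy.comp_uniformContinuousOn {E : Set ℝ} {f : ℝ → ℝ} {α : ℕ → ℝ}
    (hqc : QuasiCauchy α) (hf : UniformContinuousOn f E) (hα : ∀ k, α k ∈ E) :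
    QuasiCauchy (fun k => f (α k)) := by
  rw [quasiCauchy_iff_tendsto_uniformity] at hqc ⊢
  have hmem : ∀ᶠ k in atTop, (α (k + 1), α k) ∈ E ×ˢ E :=
    Eventually.of_forall fun k => ⟨hα (k + 1), hα k⟩
  exact Tendsto.comp hf (tendsto_inf.2 ⟨hqc, tendsto_principal.2 hmem⟩)

theorem dCount_le_of_forall_ge {β : ℕ → ℝ} {ε : ℝ} {N : ℕ}
    (h : ∀ k ≥ N, β (k + 1) - β k < ε) (n : ℕ) : dCount β ε n ≤ N := by
  calc dCount β ε n ≤ (Finset.range N).card := by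
        refine Finset.card_le_card fun k hk => Finset.mem_range.2 ?_
        by_contra! hNk
        exact (h k hNk).not_ge (Finset.mem_filter.1 hk).2
    _ = N := Finset.card_range N

theorem QuasiCauchy.rdqc {ρ β : ℕ → ℝ} (hβ : QuasiCauchy β) (htop : Tendsto ρ atTop atTop) :
    RDQC ρ β := by
  intro ε hε
  obtain ⟨N, hN⟩ := eventually_atTop.1 (hβ (Iio_mem_nhds hε))
  have hcount : ∀ n, dCount β ε n ≤ N := dCount_le_of_forall_ge hN
  have hbound : ∀ᶠ n in atTop, (dCount β ε n : ℝ) / ρ n ≤ N / ρ n := by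
    filter_upwards [htop.eventually_gt_atTop 0] with n hn
    gcongr
    exact_mod_cast hcount n
  have hnonneg : ∀ᶠ n in atTop, 0 ≤ (dCount β ε n : ℝ) / ρ n := by
    filter_upwards [htop.eventually_gt_atTop 0] with n hn
    positivity
  exact squeeze_zero' hnonneg hbound (tendsto_const_nhds.div_atTop htop)

theorem uniformCont_quasiCauchy_rdqc_general (ρ : ℕ → ℝ)
    (htop : Tendsto ρ atTop atTop) (E : Set ℝ) (f : ℝ → ℝ)
    (hf : ∀ ε : ℝ, 0 < ε → ∃ δ : ℝ, 0 < δ ∧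
      ∀ x ∈ E, ∀ y ∈ E, |x - y| < δ → |f x - f y| < ε)
    (α : ℕ → ℝ) (hα : ∀ k, α k ∈ E)
    (hqc : Tendsto (fun k => α (k + 1) - α k) atTop (nhds 0)) :
    RDQC ρ (fun k => f (α k)) := by
  have huc : UniformContinuousOn f E := by
    simpa only [Metric.uniformContinuousOn_iff, Real.dist_eq] using hf
  exact (QuasiCauchy.comp_uniformContinuousOn hqc huc hα).rdqc htop

theorem uniformCont_quasiCauchy_rdqc (ρ : ℕ → ℝ) (hpos : ∀ n, 0 < ρ n) (hmono : Monotone ρ)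
    (htop : Tendsto ρ atTop atTop) (E : Set ℝ) (f : ℝ → ℝ)
    (hf : ∀ ε : ℝ, 0 < ε → ∃ δ : ℝ, 0 < δ ∧
      ∀ x ∈ E, ∀ y ∈ E, |x - y| < δ → |f x - f y| < ε)
    (α : ℕ → ℝ) (hα : ∀ k, α k ∈ E)
    (hqc : Tendsto (fun k => α (k + 1) - α k) atTop (nhds 0)) :
    RDQC ρ (fun k => f (α k)) :=
  uniformCont_quasiCauchy_rdqc_general ρ htop E f hf α hα hqc
end

section
/- If (f_m) is a sequence of ρ-statistically downward continuous functions on a subset E of ℝ converging uniformly on E to a function f, then f is ρ-statistically downward continuous on E. -/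
open Filter Pointwise

theorem dCount_le_dCount_of_imp {α β : ℕ → ℝ} {ε δ : ℝ}
    (h : ∀ k, ε ≤ β (k + 1) - β k → δ ≤ α (k + 1) - α k) (n : ℕ) :
    dCount β ε n ≤ dCount α δ n :=
  Finset.card_le_card (Finset.monotone_filter_right _ fun k _ => h k)

theorem tendsto_dCount_div_of_imp {ρ α β : ℕ → ℝ} {ε δ : ℝ} (hpos : ∀ n, 0 < ρ n)
    (hα : Tendsto (fun n => (dCount α δ n : ℝ) / ρ n) atTop (nhds 0))
    (h : ∀ k, ε ≤ β (k + 1) - β k → δ ≤ α (k + 1) - α k) :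
    Tendsto (fun n => (dCount β ε n : ℝ) / ρ n) atTop (nhds 0) :=
  squeeze_zero (fun n => div_nonneg (Nat.cast_nonneg _) (hpos n).le)
    (fun n => div_le_div_of_nonneg_right (by exact_mod_cast dCount_le_dCount_of_imp h n)
      (hpos n).le) hα

theorem downCont_uniform_limit_general (ρ : ℕ → ℝ) (hpos : ∀ n, 0 < ρ n)
    (E : Set ℝ) (F : ℕ → ℝ → ℝ) (f : ℝ → ℝ)
    (hF : ∀ m, DownCont ρ E (F m))
    (hunif : TendstoUniformlyOn F f atTop E) : DownCont ρ E f := by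
  intro α hα hαq ε hε
  obtain ⟨m, hm⟩ := (Metric.tendstoUniformlyOn_iff.mp hunif (ε / 3) (by positivity)).exists
  -- An upward jump of `f` of size `ε` is one of `F m` of size at least `ε - 2 (ε / 3)`.
  refine tendsto_dCount_div_of_imp hpos (hF m α hα hαq (ε / 3) (by positivity)) fun k hk => ?_
  have hk₁ := abs_lt.mp (Real.dist_eq _ _ ▸ hm _ (hα (k + 1)))
  have hk₀ := abs_lt.mp (Real.dist_eq _ _ ▸ hm _ (hα k))
  linarith [hk₁.1, hk₀.2]

theorem downCont_uniform_limit (ρ : ℕ → ℝ) (hpos : ∀ n, 0 < ρ n) (hmono : Monotone ρ)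
    (htop : Tendsto ρ atTop atTop) (E : Set ℝ) (F : ℕ → ℝ → ℝ) (f : ℝ → ℝ)
    (hF : ∀ m, DownCont ρ E (F m))
    (hunif : TendstoUniformlyOn F f atTop E) : DownCont ρ E f :=
  downCont_uniform_limit_general ρ hpos E F f hF hunif
end
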